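/- Let T be a measure-preserving ergodic transformation of a probability space (X, μ) and φ : X → ℝ an integrable function with ∫ φ dμ = 0. Then for μ-almost every x and every ε > 0, there exist infinitely many n ≥ 1 with |S_nφ(x)| < ε, where S_nφ(x) = ∑_{k=0}^{n−1} φ(Tᵏ x). -/

import Mathlib

/-!
Suppose the set `B` of points whose Birkhoff sums stay `ε`-away from `0` from time `N` on had
measure `δ > 0`. The maximal ergodic theorem gives, for a typical `x` and every `η > 0`, that
`|Sₖ φ x| ≤ C + k η` for all `k` and that the orbit visits `B` at least `n δ / 2 - C'` times before
time `n`. If `k < k'` are visit times with `N ≤ k' - k`, then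
`|S_{k'} φ x - S_k φ x| = |S_{k'-k} φ (Tᵏ x)| ≥ ε`, so each residue class mod `N` holds at most
about `2 (C + n η) / ε` visits before time `n`. For `η` small compared with `ε δ / N` this
contradicts the lower bound.
-/

open MeasureTheory Filter Finset Function

section

variable {X : Type*} {T : X → X} {f : X → ℝ}

theorem bddAbove_range_birkhoffSum_apply_iff (x : X) :
    BddAbove (Set.range fun n ↦ birkhoffSum T f n (T x)) ↔
      BddAbove (Set.range fun n ↦ birkhoffSum T f n x) := by
  simp only [bddAbove_def, Set.forall_mem_range]
  constructor
  · rintro ⟨C, hC⟩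
    refine ⟨max 0 (f x + C), fun n ↦ ?_⟩
    cases n with
    | zero => simp [birkhoffSum_zero]
    | succ n => exact le_max_of_le_right (by rw [birkhoffSum_succ']; linarith [hC n])
  · rintro ⟨C, hC⟩
    exact ⟨C - f x, fun n ↦ by linarith [hC (n + 1), birkhoffSum_succ' T f n x]⟩

theorem birkhoffSum_const_apply (t : ℝ) (n : ℕ) (x : X) :
    birkhoffSum T (fun _ ↦ t) n x = n * t := by
  simp [birkhoffSum]

open Classical in
theorem birkhoffSum_indicator_one_apply (s : Set X) (n : ℕ) (x : X) :
    birkhoffSum T (s.indicator (1 : X → ℝ)) n x = #{k ∈ range n | T^[k] x ∈ s} := by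
  simp [birkhoffSum, Set.indicator_apply, sum_boole]

/-- Garsia's function `max (S₀ f x, …, Sₙ f x)`, written recursively. -/
noncomputable def birkhoffMax (T : X → X) (f : X → ℝ) : ℕ → X → ℝ
  | 0 => 0
  | n + 1 => fun x => max 0 (f x + birkhoffMax T f n (T x))

theorem birkhoffMax_succ (n : ℕ) (x : X) :
    birkhoffMax T f (n + 1) x = max 0 (f x + birkhoffMax T f n (T x)) := rfl

theorem birkhoffSum_le_birkhoffMax {k n : ℕ} (hk : k ≤ n) (x : X) :
    birkhoffSum T f k x ≤ birkhoffMax T f n x := by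
  induction n generalizing k x with
  | zero => simp [Nat.le_zero.1 hk, birkhoffMax, birkhoffSum_zero]
  | succ n ih =>
    rw [birkhoffMax_succ]
    cases k with
    | zero => exact (birkhoffSum_zero T f x).trans_le (le_max_left _ _)
    | succ k =>
      rw [birkhoffSum_succ']
      exact le_max_of_le_right (add_le_add_right (ih (Nat.succ_le_succ_iff.1 hk) (T x)) _)

theorem exists_birkhoffMax_eq_birkhoffSum (n : ℕ) (x : X) :
    ∃ k ≤ n, birkhoffMax T f n x = birkhoffSum T f k x := by
  induction n generalizing x with
  | zero => exact ⟨0, le_rfl, by simp [birkhoffMax, birkhoffSum_zero]⟩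
  | succ n ih =>
    obtain ⟨k, hkn, hk⟩ := ih (T x)
    rcases le_total (f x + birkhoffMax T f n (T x)) 0 with hle | hle
    · exact ⟨0, by omega, by rw [birkhoffMax_succ, max_eq_left hle, birkhoffSum_zero]⟩
    · exact ⟨k + 1, by omega, by rw [birkhoffMax_succ, max_eq_right hle, birkhoffSum_succ', hk]⟩

theorem birkhoffMax_nonneg (n : ℕ) (x : X) : 0 ≤ birkhoffMax T f n x := by
  simpa [birkhoffSum_zero] using birkhoffSum_le_birkhoffMax (T := T) (f := f) n.zero_le x

theorem monotone_birkhoffMax (x : X) : Monotone fun n ↦ birkhoffMax T f n x := by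
  intro m n hmn
  obtain ⟨k, hkm, hk⟩ := exists_birkhoffMax_eq_birkhoffSum (T := T) (f := f) m x
  simp only [hk]
  exact birkhoffSum_le_birkhoffMax (hkm.trans hmn) x

theorem eq_birkhoffMax_succ_sub_of_pos {n : ℕ} {x : X} (h : 0 < birkhoffMax T f (n + 1) x) :
    f x = birkhoffMax T f (n + 1) x - birkhoffMax T f n (T x) := by
  rw [birkhoffMax_succ] at h ⊢
  rw [max_eq_right (lt_max_iff.1 h |>.resolve_left (lt_irrefl 0)).le]
  ring

theorem exists_birkhoffSum_pos_iff {x : X} :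
    (∃ n, 0 < birkhoffSum T f n x) ↔ ∃ n, 0 < birkhoffMax T f (n + 1) x := by
  constructor
  · rintro ⟨n, hn⟩
    exact ⟨n, hn.trans_le (birkhoffSum_le_birkhoffMax n.le_succ x)⟩
  · rintro ⟨n, hn⟩
    obtain ⟨k, -, hk⟩ := exists_birkhoffMax_eq_birkhoffSum (T := T) (f := f) (n + 1) x
    exact ⟨k, hk ▸ hn⟩

end

section

variable {X : Type*} [MeasurableSpace X] {μ : Measure X} {T : X → X} {f : X → ℝ}

theorem measurable_birkhoffSum (hT : Measurable T) (hf : Measurable f) (n : ℕ) :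
    Measurable (birkhoffSum T f n) :=
  Finset.measurable_sum _ fun k _ ↦ hf.comp (hT.iterate k)

theorem measurable_birkhoffMax (hT : Measurable T) (hf : Measurable f) (n : ℕ) :
    Measurable (birkhoffMax T f n) := by
  induction n with
  | zero => exact measurable_const
  | succ n ih => exact measurable_const.max (hf.add (ih.comp hT))

theorem integrable_birkhoffMax (hT : MeasurePreserving T μ μ) (hfi : Integrable f μ) (n : ℕ) :
    Integrable (birkhoffMax T f n) μ := by
  induction n with
  | zero => exact integrable_zero X ℝ μ
  | succ n ih =>
    exact (integrable_zero X ℝ μ).sup (hfi.add (hT.integrable_comp_of_integrable ih))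

theorem setIntegral_birkhoffMax_pos_nonneg (hT : MeasurePreserving T μ μ) (hf : Measurable f)
    (hfi : Integrable f μ) (n : ℕ) :
    0 ≤ ∫ x in {x | 0 < birkhoffMax T f (n + 1) x}, f x ∂μ := by
  set A := {x | 0 < birkhoffMax T f (n + 1) x}
  have hA : MeasurableSet A :=
    measurableSet_lt measurable_const (measurable_birkhoffMax hT.measurable hf _)
  have hM := integrable_birkhoffMax hT hfi
  have hMT : Integrable (fun x ↦ birkhoffMax T f n (T x)) μ :=
    hT.integrable_comp_of_integrable (hM n)
  have h_on_A : ∫ x in A, birkhoffMax T f (n + 1) x ∂μ = ∫ x, birkhoffMax T f (n + 1) x ∂μ :=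
    setIntegral_eq_integral_of_forall_compl_eq_zero fun x hx ↦
      le_antisymm (not_lt.1 hx) (birkhoffMax_nonneg _ x)
  have h_comp : ∫ x, birkhoffMax T f n (T x) ∂μ = ∫ x, birkhoffMax T f n x ∂μ := by
    have hM' : AEStronglyMeasurable (birkhoffMax T f n) (μ.map T) := by
      rw [hT.map_eq]; exact (hM n).aestronglyMeasurable
    rw [← integral_map hT.measurable.aemeasurable hM', hT.map_eq]
  calc 0 ≤ ∫ x, birkhoffMax T f (n + 1) x ∂μ - ∫ x, birkhoffMax T f n x ∂μ :=
        sub_nonneg.2 <| integral_mono (hM n) (hM (n + 1))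
          fun x ↦ monotone_birkhoffMax x n.le_succ
    _ ≤ ∫ x in A, birkhoffMax T f (n + 1) x ∂μ - ∫ x in A, birkhoffMax T f n (T x) ∂μ := by
        rw [h_on_A, ← h_comp]
        exact sub_le_sub_left (setIntegral_le_integral hMT
          (.of_forall fun x ↦ birkhoffMax_nonneg n (T x))) _
    _ = ∫ x in A, f x ∂μ := by
        rw [← integral_sub (hM _).integrableOn hMT.integrableOn]
        exact setIntegral_congr_fun hA fun x hx ↦ (eq_birkhoffMax_succ_sub_of_pos hx).symm

/-- The maximal ergodic theorem. -/
theorem setIntegral_exists_birkhoffSum_pos_nonneg (hT : MeasurePreserving T μ μ)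
    (hf : Measurable f) (hfi : Integrable f μ) :
    0 ≤ ∫ x in {x | ∃ n, 0 < birkhoffSum T f n x}, f x ∂μ := by
  have hunion : {x | ∃ n, 0 < birkhoffSum T f n x} = ⋃ n, {x | 0 < birkhoffMax T f (n + 1) x} := by
    ext; simp [exists_birkhoffSum_pos_iff]
  rw [hunion]
  refine ge_of_tendsto' (tendsto_setIntegral_of_monotone
    (fun n ↦ measurableSet_lt measurable_const (measurable_birkhoffMax hT.measurable hf _))
    (fun m n hmn x hx ↦ hx.trans_le (monotone_birkhoffMax x (by omega))) hfi.integrableOn)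
    (setIntegral_birkhoffMax_pos_nonneg hT hf hfi)

theorem ae_bddAbove_range_birkhoffSum_of_integral_neg (hT : Ergodic T μ) (hf : Measurable f)
    (hfi : Integrable f μ) (hneg : ∫ x, f x ∂μ < 0) :
    ∀ᵐ x ∂μ, BddAbove (Set.range fun n ↦ birkhoffSum T f n x) := by
  set E := {x | BddAbove (Set.range fun n ↦ birkhoffSum T f n x)}
  have hE : MeasurableSet E :=
    measurableSet_bddAbove_range (measurable_birkhoffSum hT.measurable hf)
  have hTE : T ⁻¹' E = E := Set.ext bddAbove_range_birkhoffSum_apply_iff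
  obtain hE_null | hE_full := hT.ae_empty_or_univ hE hTE
  · have hpos : {x | ∃ n, 0 < birkhoffSum T f n x} =ᵐ[μ] Set.univ := by
      refine eventuallyEq_univ.2 ?_
      filter_upwards [measure_eq_zero_iff_ae_notMem.1 (ae_eq_empty.1 hE_null)] with x hx
      simp only [E, Set.mem_ofPred_eq, bddAbove_def, Set.forall_mem_range, not_exists,
        not_forall, not_le] at hx
      exact hx 0
    have := setIntegral_exists_birkhoffSum_pos_nonneg hT.toMeasurePreserving hf hfi
    rw [setIntegral_congr_set hpos, setIntegral_univ] at this
    exact absurd hneg this.not_gt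
  · exact eventuallyEq_univ.1 hE_full

theorem ae_exists_birkhoffSum_le_add_mul [IsProbabilityMeasure μ] (hT : Ergodic T μ)
    (hf : Measurable f) (hfi : Integrable f μ) {t : ℝ} (ht : ∫ x, f x ∂μ < t) :
    ∀ᵐ x ∂μ, ∃ C, ∀ n : ℕ, birkhoffSum T f n x ≤ C + n * t := by
  have hneg : ∫ x, f x - t ∂μ < 0 := by
    rw [integral_sub hfi (integrable_const t)]; simpa using ht
  filter_upwards [ae_bddAbove_range_birkhoffSum_of_integral_neg hT (hf.sub measurable_const)
    (hfi.sub (integrable_const t)) hneg] with x ⟨C, hC⟩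
  refine ⟨C, fun n ↦ ?_⟩
  have : birkhoffSum T (f - fun _ ↦ t) n x ≤ C := hC ⟨n, rfl⟩
  rw [birkhoffSum_sub, birkhoffSum_const_apply] at this
  linarith

theorem ae_exists_abs_birkhoffSum_le_add_mul [IsProbabilityMeasure μ] (hT : Ergodic T μ)
    (hf : Measurable f) (hfi : Integrable f μ) (hzero : ∫ x, f x ∂μ = 0) {η : ℝ} (hη : 0 < η) :
    ∀ᵐ x ∂μ, ∃ C, ∀ n : ℕ, |birkhoffSum T f n x| ≤ C + n * η := by
  filter_upwards [ae_exists_birkhoffSum_le_add_mul hT hf hfi (hzero ▸ hη),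
    ae_exists_birkhoffSum_le_add_mul hT hf.neg hfi.neg (t := η) (by simpa [integral_neg, hzero])]
    with x ⟨C₁, hC₁⟩ ⟨C₂, hC₂⟩
  refine ⟨max C₁ C₂, fun n ↦ abs_le.2 ⟨?_, ?_⟩⟩
  · have := hC₂ n
    rw [birkhoffSum_neg] at this
    linarith [le_max_right C₁ C₂]
  · linarith [hC₁ n, le_max_left C₁ C₂]

open Classical in
theorem ae_exists_card_visits_ge [IsProbabilityMeasure μ] (hT : Ergodic T μ) {s : Set X}
    (hs : MeasurableSet s) {c : ℝ} (hc : c < μ.real s) :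
    ∀ᵐ x ∂μ, ∃ C, ∀ n : ℕ, n * c - C ≤ #{k ∈ range n | T^[k] x ∈ s} := by
  have hint : ∫ x, -s.indicator 1 x ∂μ < -c := by
    rw [integral_neg, integral_indicator_one hs]; linarith
  have hm : Measurable (s.indicator (1 : X → ℝ)) := measurable_one.indicator hs
  have hi : Integrable (s.indicator (1 : X → ℝ)) μ := (integrable_const 1).indicator hs
  filter_upwards [ae_exists_birkhoffSum_le_add_mul hT hm.neg hi.neg hint] with x ⟨C, hC⟩
  refine ⟨C, fun n ↦ ?_⟩
  have := hC n
  rw [birkhoffSum_neg, birkhoffSum_indicator_one_apply] at this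
  linarith

end

theorem card_Icc_floor_neg_le {a : ℝ} (ha : 0 ≤ a) : (#(Icc ⌊-a⌋ ⌊a⌋) : ℝ) ≤ 2 * a + 2 := by
  have hle : ⌊-a⌋ ≤ ⌊a⌋ + 1 := (Int.floor_mono (by linarith)).trans (by omega)
  have hcard : ((#(Icc ⌊-a⌋ ⌊a⌋) : ℤ) : ℝ) = ⌊a⌋ + 1 - ⌊-a⌋ := by
    rw [Int.card_Icc_of_le _ _ hle]; push_cast; ring
  rw [Int.cast_natCast] at hcard
  linarith [Int.floor_le a, Int.sub_one_lt_floor (-a)]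

theorem card_le_of_abs_le_of_separated {s : ℕ → ℝ} {K : Finset ℕ} {N : ℕ} {ε M : ℝ}
    (hN : 0 < N) (hε : 0 < ε) (hM : 0 ≤ M) (hbound : ∀ k ∈ K, |s k| ≤ M)
    (hsep : ∀ k ∈ K, ∀ k', k < k' → N ≤ k' - k → ε ≤ |s k' - s k|) :
    (#K : ℝ) ≤ N * (2 * (M / ε) + 2) := by
  set g : ℕ → ℕ × ℤ := fun k ↦ (k % N, ⌊s k / ε⌋)
  have hmaps : ∀ k ∈ K, g k ∈ range N ×ˢ Icc ⌊-(M / ε)⌋ ⌊M / ε⌋ := by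
    intro k hk
    have := abs_le.1 (hbound k hk)
    simp only [g, mem_product, mem_range, mem_Icc]
    refine ⟨Nat.mod_lt k hN, Int.floor_mono ?_, Int.floor_mono ?_⟩
    · rw [← neg_div]; gcongr; exact this.1
    · gcongr; exact this.2
  have hne : ∀ k ∈ K, ∀ k', k < k' → g k ≠ g k' := by
    intro k hk k' hkk' hg
    obtain ⟨hmod, hfloor⟩ := Prod.ext_iff.1 hg
    have hgap : N ≤ k' - k :=
      Nat.le_of_dvd (by omega) ((Nat.modEq_iff_dvd' hkk'.le).1 hmod)
    have hclose : |s k' - s k| < ε := by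
      have := Int.abs_sub_lt_one_of_floor_eq_floor hfloor.symm
      rwa [← sub_div, abs_div, abs_of_pos hε, div_lt_one hε] at this
    exact (hsep k hk k' hkk' hgap).not_gt hclose
  have hinj : Set.InjOn g K := by
    intro k hk k' hk' hg
    rcases lt_trichotomy k k' with hlt | heq | hgt
    · exact absurd hg (hne k hk k' hlt)
    · exact heq
    · exact absurd hg.symm (hne k' hk' k hgt)
  calc (#K : ℝ) ≤ #(range N ×ˢ Icc ⌊-(M / ε)⌋ ⌊M / ε⌋) := by
        exact_mod_cast card_le_card_of_injOn g hmaps hinj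
    _ = N * #(Icc ⌊-(M / ε)⌋ ⌊M / ε⌋) := by rw [card_product, card_range]; push_cast; rfl
    _ ≤ N * (2 * (M / ε) + 2) := by gcongr; exact card_Icc_floor_neg_le (by positivity)

section

variable {X : Type*} [MeasurableSpace X] {μ : Measure X} [IsProbabilityMeasure μ] {T : X → X}
  {f : X → ℝ}

theorem ae_exists_ge_abs_birkhoffSum_lt (hT : Ergodic T μ) (hf : Measurable f)
    (hfi : Integrable f μ) (hzero : ∫ x, f x ∂μ = 0) {ε : ℝ} (hε : 0 < ε) {N : ℕ} (hN : 0 < N) :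
    ∀ᵐ x ∂μ, ∃ n ≥ N, |birkhoffSum T f n x| < ε := by
  classical
  set B := {x | ∀ n ≥ N, ε ≤ |birkhoffSum T f n x|}
  have hB : MeasurableSet B := by
    simp only [B, Set.ofPred_forall]
    exact .iInter fun n ↦ .iInter fun _ ↦
      measurableSet_le measurable_const (measurable_birkhoffSum hT.measurable hf n).abs
  suffices hB0 : μ B = 0 by
    filter_upwards [measure_eq_zero_iff_ae_notMem.1 hB0] with x hx
    simpa [B] using hx
  by_contra hB0
  set δ := μ.real B
  have hδ : 0 < δ := ENNReal.toReal_pos hB0 (measure_ne_top μ B)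
  set η := ε * δ / (8 * N)
  have hη : 0 < η := by positivity
  obtain ⟨x, ⟨C₁, hvisits⟩, ⟨C, hC⟩⟩ := ((ae_exists_card_visits_ge hT hB (half_lt_self hδ)).and
    (ae_exists_abs_birkhoffSum_le_add_mul hT hf hfi hzero hη)).exists
  have hC0 : 0 ≤ C := by simpa [birkhoffSum_zero] using hC 0
  obtain ⟨n, hn⟩ := exists_nat_gt (4 * (C₁ + 2 * N * C / ε + 2 * N) / δ)
  -- Visits to `B` in one residue class mod `N` are `ε`-separated; `η` makes the resulting upper
  -- bound on the number of visits grow like `n δ / 4`, half the rate of the lower bound.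
  have hupper := card_le_of_abs_le_of_separated (s := fun k ↦ birkhoffSum T f k x)
    (K := {k ∈ range n | T^[k] x ∈ B}) (M := C + n * η) hN hε (by positivity)
    (fun k hk ↦ (hC k).trans (by gcongr; exact_mod_cast (mem_range.1 (mem_filter.1 hk).1).le))
    (fun k hk k' hkk' hgap ↦ by
      have hsplit := birkhoffSum_add T f k (k' - k) x
      rw [Nat.add_sub_cancel' hkk'.le] at hsplit
      rw [hsplit, add_sub_cancel_left]
      exact (mem_filter.1 hk).2 _ hgap)
  have hlower := hvisits n
  have hexpand : (N : ℝ) * (2 * ((C + n * η) / ε) + 2) = 2 * N * C / ε + n * δ / 4 + 2 * N := by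
    simp only [η]; field_simp; ring
  rw [div_lt_iff₀ hδ] at hn
  linarith

end

theorem stmt4 {X : Type*} [MeasurableSpace X] (μ : Measure X) [IsProbabilityMeasure μ]
    (T : X → X) (hT : Ergodic T μ) (φ : X → ℝ) (hφ : Integrable φ μ)
    (hzero : ∫ x, φ x ∂μ = 0) :
    ∀ᵐ x ∂μ, ∀ ε > 0, ∀ N : ℕ, ∃ n ≥ N, 1 ≤ n ∧
      |∑ k ∈ Finset.range n, φ (T^[k] x)| < ε := by
  obtain ⟨g, hg, hφg⟩ := hφ.aemeasurable
  have hsum : ∀ᵐ x ∂μ, ∀ n, birkhoffSum T φ n x = birkhoffSum T g n x :=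
    ae_all_iff.2 (hT.quasiMeasurePreserving.birkhoffSum_ae_eq_of_ae_eq hφg)
  have hsmall : ∀ᵐ x ∂μ, ∀ m N : ℕ, ∃ n ≥ N + 1, |birkhoffSum T g n x| < 1 / (m + 1) :=
    ae_all_iff.2 fun m ↦ ae_all_iff.2 fun N ↦
      ae_exists_ge_abs_birkhoffSum_lt hT hg (hφ.congr hφg)
        (integral_congr_ae hφg ▸ hzero) Nat.one_div_pos_of_nat N.succ_pos
  filter_upwards [hsum, hsmall] with x hsum hsmall ε hε N
  obtain ⟨m, hm⟩ := exists_nat_one_div_lt hε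
  obtain ⟨n, hn, hlt⟩ := hsmall m N
  refine ⟨n, by omega, by omega, ?_⟩
  change |birkhoffSum T φ n x| < ε
  rw [hsum n]
  exact hlt.trans hm
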